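/- Near-uniformity of a random entry of a random matrix from a large set: let D, N, L be positive integers and c ≥ 0 a real number. Let S be a nonempty subset of the set of functions {1,…,D} × {1,…,N} → {0,1}^L (D×N matrices with entries in {0,1}^L) with |S| ≥ 2^{D·N·L − c}. Fix a row index ρ ∈ {1,…,D}. Let q be the pmf on {0,1}^L of the entry A(ρ, J) when A is drawn uniformly from S and J is drawn uniformly from {1,…,N} independently of A, i.e., q(y) = (1/N) · ∑_{j=1}^{N} |{A ∈ S : A(ρ, j) = y}| / |S|. Then the statistical distance between q and the uniform pmf u_L on {0,1}^L (u_L(y) = 2^{−L} for all y) satisfies SD(q, u_L) ≤ √(c/(2N)). (Combination of the entropy chain with Claim 2.5, establishing Equation (SD:R') in the proof of Lemma 3.2.) -/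

import Mathlib

/-!
Let `m_k` be the law of entry `k` of a uniformly random `A ∈ S`. Comparing the uniform law
on `S` with the product of the `m_k` (Gibbs) gives `log₂ |S| ≤ ∑_k H(m_k)`; as every
`H(m_k) ≤ L` and `log₂ |S| ≥ DNL - c`, the entropy deficits `L - H(m_k)` sum to at most `c`,
in particular along row `ρ`. The law `q` is the average of the `N` laws of row `ρ`, so by
concavity of entropy its deficit `L - H(q)`, which is its divergence from the uniform law, is
at most `c / N`. Pinsker's inequality turns this into the bound on the statistical distance.
-/

open Finset

open scoped Classical in
/-- `p` is a probability mass function on the finite type `Ω`. -/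
def IsPMF {Ω : Type*} [Fintype Ω] (p : Ω → ℝ) : Prop :=
  (∀ x, 0 ≤ p x) ∧ ∑ x, p x = 1

open scoped Classical in
/-- Statistical distance between two pmfs on a finite type. -/
noncomputable def SD {Ω : Type*} [Fintype Ω] (p q : Ω → ℝ) : ℝ :=
  (1 / 2) * ∑ x, |p x - q x|

open scoped Classical in
/-- Base-2 Shannon entropy of a pmf on a finite type. -/
noncomputable def H2 {Ω : Type*} [Fintype Ω] (p : Ω → ℝ) : ℝ :=
  ∑ x, if p x = 0 then 0 else p x * Real.logb 2 (1 / p x)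

open scoped Classical in
/-- Base-2 Kullback–Leibler divergence between two pmfs on a finite type. -/
noncomputable def KL2 {Ω : Type*} [Fintype Ω] (p q : Ω → ℝ) : ℝ :=
  ∑ x, if p x = 0 then 0 else p x * Real.logb 2 (p x / q x)

open Real

theorem sum_mul_log_div_sum_le {ι : Type*} (s : Finset ι) {a b : ι → ℝ}
    (ha : ∀ i ∈ s, 0 ≤ a i) (hb : ∀ i ∈ s, 0 < b i) :
    (∑ i ∈ s, a i) * log ((∑ i ∈ s, a i) / ∑ i ∈ s, b i) ≤
      ∑ i ∈ s, a i * log (a i / b i) := by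
  rcases s.eq_empty_or_nonempty with rfl | hs
  · simp
  -- Jensen for `x log x` at the points `a i / b i` with weights `b i / ∑ b`
  set B := ∑ i ∈ s, b i
  have hB : 0 < B := sum_pos hb hs
  have jensen := convexOn_mul_log.map_sum_le (t := s) (w := fun i => b i / B)
    (p := fun i => a i / b i) (fun i hi => (div_pos (hb i hi) hB).le)
    (by rw [← sum_div, div_self hB.ne']) (fun i hi => div_nonneg (ha i hi) (hb i hi).le)
  have hmean : ∑ i ∈ s, (b i / B) • (a i / b i) = (∑ i ∈ s, a i) / B := by
    rw [sum_div]
    exact sum_congr rfl fun i hi => by rw [smul_eq_mul]; field_simp [(hb i hi).ne']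
  have hterms : ∑ i ∈ s, (b i / B) • (a i / b i * log (a i / b i)) =
      (∑ i ∈ s, a i * log (a i / b i)) / B := by
    rw [sum_div]
    exact sum_congr rfl fun i hi => by rw [smul_eq_mul]; field_simp [(hb i hi).ne']
  rw [hmean, hterms, div_mul_eq_mul_div, div_le_div_iff_of_pos_right hB] at jensen
  exact jensen

-- For fixed `a`, the difference of the two sides, as a function of `b`, decreases up to `a`.
theorem two_mul_sq_le_binary_kl {a b : ℝ} (hb : 0 < b) (hba : b ≤ a) (ha : a ≤ 1) :
    2 * (a - b) ^ 2 ≤ a * log (a / b) + (1 - a) * log ((1 - a) / (1 - b)) := by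
  set g : ℝ → ℝ := fun t =>
    a * log a + (1 - a) * log (1 - a) - a * log t - (1 - a) * log (1 - t) - 2 * (a - t) ^ 2
  have hderiv : ∀ t ∈ Set.Ioo b a, HasDerivAt g ((t - a) / (t * (1 - t)) + 4 * (a - t)) t := by
    rintro t ⟨hbt, hta⟩
    have ht : 0 < t := hb.trans hbt
    have ht1 : 0 < 1 - t := by linarith
    have := ((((hasDerivAt_log ht.ne').const_mul a).const_sub
      (a * log a + (1 - a) * log (1 - a))).sub
      ((((hasDerivAt_id' t).const_sub 1).log ht1.ne').const_mul (1 - a))).sub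
      ((((hasDerivAt_id' t).const_sub a).pow 2).const_mul 2)
    refine this.congr_deriv ?_
    field_simp
    ring
  have hcont : ContinuousOn g (Set.Icc b a) := by
    have hlog : ContinuousOn log (Set.Icc b a) :=
      continuousOn_log.mono fun t ht => (hb.trans_le ht.1).ne'
    have hlog1 : ContinuousOn (fun t => (1 - a) * log (1 - t)) (Set.Icc b a) := by
      rcases ha.eq_or_lt with rfl | ha1
      · simpa using continuousOn_const
      · exact continuousOn_const.mul
          ((continuousOn_const.sub continuousOn_id).log fun t ht => by simp; linarith [ht.2])
    exact ((continuousOn_const.sub (continuousOn_const.mul hlog)).sub hlog1).sub (by fun_prop)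
  have hanti : AntitoneOn g (Set.Icc b a) := by
    refine antitoneOn_of_deriv_nonpos (convex_Icc b a) hcont ?_ ?_ <;> rw [interior_Icc]
    · exact fun t ht => (hderiv t ht).differentiableAt.differentiableWithinAt
    · intro t ht
      obtain ⟨hbt, hta⟩ := ht
      have ht : 0 < t * (1 - t) := mul_pos (hb.trans hbt) (by linarith)
      rw [(hderiv t ⟨hbt, hta⟩).deriv, ← le_neg_iff_add_nonpos_right, div_le_iff₀ ht]
      -- `1 - 4 t (1 - t) = (1 - 2 t)²`
      nlinarith [mul_nonneg (sub_nonneg.2 hta.le) (sq_nonneg (1 - 2 * t))]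
  have hga : g a = 0 := by simp [g]
  have hgb : g b = a * log (a / b) + (1 - a) * log ((1 - a) / (1 - b)) - 2 * (a - b) ^ 2 := by
    rcases ha.eq_or_lt with rfl | ha1
    · simp [g]
    · simp only [g, log_div (hb.trans_le hba).ne' hb.ne',
        log_div (by linarith : 1 - a ≠ 0) (by linarith : 1 - b ≠ 0)]
      ring
  linarith [hanti (Set.left_mem_Icc.2 hba) (Set.right_mem_Icc.2 hba) hba]

section Divergence
variable {Ω : Type*} [Fintype Ω]

theorem KL2_eq_sum_mul_log_div (p q : Ω → ℝ) :
    KL2 p q = (∑ x, p x * log (p x / q x)) / log 2 := by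
  rw [KL2, sum_div]
  refine sum_congr rfl fun x _ => ?_
  split_ifs with h
  · simp [h]
  · rw [logb, mul_div_assoc]

theorem H2_eq_sum_negMulLog (p : Ω → ℝ) : H2 p = (∑ x, negMulLog (p x)) / log 2 := by
  rw [H2, sum_div]
  refine sum_congr rfl fun x _ => ?_
  split_ifs with h
  · simp [h]
  · rw [logb, one_div, log_inv, negMulLog]
    ring

theorem KL2_const_right {p : Ω → ℝ} (hp : IsPMF p) {u : ℝ} (hu : 0 < u) :
    KL2 p (fun _ => u) = -logb 2 u - H2 p := by
  rw [KL2_eq_sum_mul_log_div, H2_eq_sum_negMulLog, logb, ← neg_div, ← sub_div]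
  congr 1
  have hsplit : ∀ x, p x * log (p x / u) = -(p x * log u) - negMulLog (p x) := fun x => by
    rcases eq_or_ne (p x) 0 with h | h
    · simp [h]
    · rw [log_div h hu.ne', negMulLog]
      ring
  simp_rw [hsplit, sum_sub_distrib, sum_neg_distrib, ← sum_mul, hp.2, one_mul]

-- Pinsker's inequality, reduced to two points by the log-sum inequality on `{q ≤ p}` and on
-- its complement.
theorem two_mul_sq_SD_le_log_two_mul_KL2 {p q : Ω → ℝ} (hp : IsPMF p) (hq : IsPMF q)
    (hq0 : ∀ x, 0 < q x) : 2 * SD p q ^ 2 ≤ log 2 * KL2 p q := by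
  classical
  rw [KL2_eq_sum_mul_log_div, mul_div_cancel₀ _ (log_pos one_lt_two).ne']
  set E := univ.filter fun x => q x ≤ p x
  set F := univ.filter fun x => ¬q x ≤ p x
  have hsplit (f : Ω → ℝ) : ∑ x, f x = ∑ x ∈ E, f x + ∑ x ∈ F, f x :=
    (sum_filter_add_sum_filter_not univ _ f).symm
  set a := ∑ x ∈ E, p x
  set b := ∑ x ∈ E, q x
  have hpF : ∑ x ∈ F, p x = 1 - a := by linarith [hsplit p, hp.2]
  have hqF : ∑ x ∈ F, q x = 1 - b := by linarith [hsplit q, hq.2]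
  have hSD : SD p q = a - b := by
    have hE : ∑ x ∈ E, |p x - q x| = a - b := by
      rw [← sum_sub_distrib]
      exact sum_congr rfl fun x hx => abs_of_nonneg (sub_nonneg.2 (mem_filter.1 hx).2)
    have hF : ∑ x ∈ F, |p x - q x| = (1 - b) - (1 - a) := by
      rw [← hpF, ← hqF, ← sum_sub_distrib]
      exact sum_congr rfl fun x hx => abs_sub_comm (p x) (q x) ▸
        abs_of_nonneg (sub_nonneg.2 (not_le.1 (mem_filter.1 hx).2).le)
    rw [SD, hsplit, hE, hF]
    ring
  have hkl : a * log (a / b) + (1 - a) * log ((1 - a) / (1 - b)) ≤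
      ∑ x, p x * log (p x / q x) := by
    rw [hsplit, ← hpF, ← hqF]
    exact add_le_add (sum_mul_log_div_sum_le E (fun x _ => hp.1 x) fun x _ => hq0 x)
      (sum_mul_log_div_sum_le F (fun x _ => hp.1 x) fun x _ => hq0 x)
  rcases E.eq_empty_or_nonempty with hE | hE
  · simpa [hSD, a, b, hE] using hkl
  have hb : 0 < b := sum_pos (fun x _ => hq0 x) hE
  have hba : b ≤ a := sum_le_sum fun x hx => (mem_filter.1 hx).2
  have ha : a ≤ 1 := by linarith [hpF ▸ sum_nonneg fun x (_ : x ∈ F) => hp.1 x]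
  rw [hSD]
  exact (two_mul_sq_le_binary_kl hb hba ha).trans hkl

theorem IsPMF.card_pos {p : Ω → ℝ} (hp : IsPMF p) : 0 < Fintype.card Ω := by
  refine Fintype.card_pos_iff.2 ?_
  by_contra h
  simpa [not_nonempty_iff.1 h] using hp.2

theorem H2_le_logb_card {p : Ω → ℝ} (hp : IsPMF p) : H2 p ≤ logb 2 (Fintype.card Ω) := by
  set n : ℝ := (Fintype.card Ω : ℝ)
  have hn : 0 < n := Nat.cast_pos.2 hp.card_pos
  have jensen := concaveOn_negMulLog.le_map_sum (t := univ) (w := fun _ => n⁻¹) (p := p)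
    (fun _ _ => by positivity) (by simp [n, hn.ne']) (fun x _ => hp.1 x)
  rw [← smul_sum, ← smul_sum, hp.2, smul_eq_mul, smul_eq_mul, mul_one, negMulLog, log_inv,
    neg_mul_neg, mul_le_mul_iff_right₀ (inv_pos.2 hn)] at jensen
  rw [H2_eq_sum_negMulLog, logb]
  exact div_le_div_of_nonneg_right jensen (log_pos one_lt_two).le

theorem two_mul_sq_SD_uniform_le {p : Ω → ℝ} (hp : IsPMF p) :
    2 * SD p (fun _ => 1 / (Fintype.card Ω : ℝ)) ^ 2 ≤
      log 2 * (logb 2 (Fintype.card Ω) - H2 p) := by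
  have hn : (0 : ℝ) < Fintype.card Ω := Nat.cast_pos.2 hp.card_pos
  have hu : IsPMF fun _ : Ω => 1 / (Fintype.card Ω : ℝ) :=
    ⟨fun _ => by positivity, by simp [hn.ne']⟩
  have hlogb : -logb 2 (1 / (Fintype.card Ω : ℝ)) = logb 2 (Fintype.card Ω) := by
    rw [one_div, logb_inv, neg_neg]
  have := two_mul_sq_SD_le_log_two_mul_KL2 hp hu fun _ => by positivity
  rwa [KL2_const_right hp (by positivity), hlogb] at this

section Mixture
variable {ι : Type*} (t : Finset ι) {w : ι → ℝ} {p : ι → Ω → ℝ}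

theorem IsPMF.sum_mul (hw : ∀ i ∈ t, 0 ≤ w i) (hw1 : ∑ i ∈ t, w i = 1)
    (hp : ∀ i ∈ t, IsPMF (p i)) : IsPMF fun x => ∑ i ∈ t, w i * p i x := by
  refine ⟨fun x => sum_nonneg fun i hi => mul_nonneg (hw i hi) ((hp i hi).1 x), ?_⟩
  rw [sum_comm, ← hw1]
  exact sum_congr rfl fun i hi => by rw [← mul_sum, (hp i hi).2, mul_one]

theorem sum_mul_H2_le_H2_sum (hw : ∀ i ∈ t, 0 ≤ w i) (hw1 : ∑ i ∈ t, w i = 1)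
    (hp : ∀ i ∈ t, ∀ x, 0 ≤ p i x) :
    ∑ i ∈ t, w i * H2 (p i) ≤ H2 fun x => ∑ i ∈ t, w i * p i x := by
  simp_rw [H2_eq_sum_negMulLog, mul_div_assoc', ← sum_div, mul_sum]
  refine div_le_div_of_nonneg_right ?_ (log_pos one_lt_two).le
  rw [sum_comm]
  exact sum_le_sum fun x _ => concaveOn_negMulLog.le_map_sum hw hw1 fun i hi => hp i hi x

end Mixture

end Divergence

section Marginal
variable {K V : Type*} [DecidableEq V] {S : Finset (K → V)}

noncomputable def marginal (S : Finset (K → V)) (k : K) (v : V) : ℝ :=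
  (S.filter fun A => A k = v).card / S.card

theorem marginal_pos {A : K → V} (hA : A ∈ S) (k : K) : 0 < marginal S k (A k) := by
  have hk : 0 < (S.filter fun B => B k = A k).card := card_pos.2 ⟨A, mem_filter.2 ⟨hA, rfl⟩⟩
  exact div_pos (Nat.cast_pos.2 hk) (Nat.cast_pos.2 (card_pos.2 ⟨A, hA⟩))

variable [Fintype V]

theorem isPMF_marginal (hS : S.Nonempty) (k : K) : IsPMF (marginal S k) := by
  refine ⟨fun v => by unfold marginal; positivity, ?_⟩
  simp_rw [marginal, ← sum_div, ← Nat.cast_sum,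
    ← card_eq_sum_card_fiberwise fun A (_ : A ∈ S) => mem_univ (A k)]
  exact div_self (Nat.cast_ne_zero.2 hS.card_pos.ne')

theorem sum_log_marginal (hS : S.Nonempty) (k : K) :
    ∑ A ∈ S, log (marginal S k (A k)) = -(S.card * ∑ v, negMulLog (marginal S k v)) := by
  rw [← sum_fiberwise S (fun A => A k), mul_sum, ← sum_neg_distrib]
  refine sum_congr rfl fun v _ => ?_
  rw [sum_congr rfl fun A hA => by rw [(mem_filter.1 hA).2], sum_const, nsmul_eq_mul, negMulLog,
    marginal]
  field_simp [Nat.cast_ne_zero.2 hS.card_pos.ne']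

variable [Fintype K]

theorem sum_prod_marginal_le_one (hS : S.Nonempty) :
    ∑ A ∈ S, ∏ k, marginal S k (A k) ≤ 1 := by
  classical
  calc ∑ A ∈ S, ∏ k, marginal S k (A k) ≤ ∑ A : K → V, ∏ k, marginal S k (A k) := by
        refine sum_le_univ_sum_of_nonneg fun A => prod_nonneg fun k _ => ?_
        exact (isPMF_marginal hS k).1 _
    _ = ∏ k, ∑ v, marginal S k v := by rw [prod_univ_sum, Fintype.piFinset_univ]
    _ = 1 := by simp [(isPMF_marginal hS _).2]

theorem logb_card_le_sum_H2_marginal (hS : S.Nonempty) :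
    logb 2 S.card ≤ ∑ k, H2 (marginal S k) := by
  have hS0 : (0 : ℝ) < S.card := Nat.cast_pos.2 hS.card_pos
  -- Gibbs' inequality `log x ≤ x - 1` for the uniform law on `S` against the product of marginals
  have hgibbs : ∀ A ∈ S, log S.card + ∑ k, log (marginal S k (A k)) ≤
      S.card * ∏ k, marginal S k (A k) - 1 := fun A hA => by
    rw [← log_prod fun k _ => (marginal_pos hA k).ne', ← log_mul hS0.ne'
      (prod_pos fun k _ => marginal_pos hA k).ne']
    exact log_le_sub_one_of_pos (mul_pos hS0 (prod_pos fun k _ => marginal_pos hA k))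
  have hsum := sum_le_sum hgibbs
  rw [sum_add_distrib, sum_comm, sum_sub_distrib, ← mul_sum] at hsum
  simp only [sum_const, nsmul_eq_mul, sum_log_marginal hS, sum_neg_distrib, mul_one] at hsum
  have hprod := sum_prod_marginal_le_one hS
  simp_rw [H2_eq_sum_negMulLog, ← sum_div, logb]
  refine div_le_div_of_nonneg_right ?_ (log_pos one_lt_two).le
  rw [← mul_sum] at hsum
  nlinarith

theorem sum_logb_card_sub_H2_marginal_le (hS : S.Nonempty) :
    ∑ k, (logb 2 (Fintype.card V) - H2 (marginal S k)) ≤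
      Fintype.card K * logb 2 (Fintype.card V) - logb 2 S.card := by
  rw [sum_sub_distrib, sum_const, card_univ, nsmul_eq_mul]
  linarith [logb_card_le_sum_H2_marginal hS]

theorem sum_row_logb_card_sub_H2_marginal_le {I J : Type*} [Fintype I] [Fintype J]
    {S : Finset (I × J → V)} (hS : S.Nonempty) (i : I) :
    ∑ j, (logb 2 (Fintype.card V) - H2 (marginal S (i, j))) ≤
      Fintype.card I * Fintype.card J * logb 2 (Fintype.card V) - logb 2 S.card := by
  have htotal := sum_logb_card_sub_H2_marginal_le hS
  rw [Fintype.sum_prod_type, Fintype.card_prod, Nat.cast_mul] at htotal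
  refine le_trans ?_ htotal
  exact single_le_sum (f := fun i' => ∑ j, (logb 2 (Fintype.card V) - H2 (marginal S (i', j))))
    (fun _ _ => sum_nonneg fun _ _ => sub_nonneg.2 (H2_le_logb_card (isPMF_marginal hS _)))
    (mem_univ i)

end Marginal

open scoped Classical in
theorem sd_random_entry_general (D N L : ℕ) (hN : 0 < N)
    (c : ℝ) (hc : 0 ≤ c)
    (S : Finset (Fin D × Fin N → (Fin L → Bool))) (hS : S.Nonempty)
    (hcard : (S.card : ℝ) ≥ (2 : ℝ) ^ (((D * N * L : ℕ) : ℝ) - c))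
    (ρ : Fin D)
    (q : (Fin L → Bool) → ℝ)
    (hq : ∀ y, q y = (1 / (N : ℝ)) *
      ∑ j : Fin N, ((S.filter fun A => A (ρ, j) = y).card : ℝ) / S.card) :
    SD q (fun _ => (1 : ℝ) / 2 ^ L) ≤ Real.sqrt (c / (2 * N)) := by
  have hm := isPMF_marginal hS
  have hcardΩ : (Fintype.card (Fin L → Bool) : ℝ) = 2 ^ L := by simp
  have hℓ : logb 2 (Fintype.card (Fin L → Bool)) = L := by
    rw [hcardΩ, logb_pow, logb_self_eq_one one_lt_two, mul_one]
  have hw : ∑ _j : Fin N, (1 / N : ℝ) = 1 := by simp [hN.ne']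
  have hqmix : q = fun y => ∑ j, (1 / N : ℝ) * marginal S (ρ, j) y :=
    funext fun y => by rw [hq, mul_sum]; rfl
  have hqpmf : IsPMF q :=
    hqmix ▸ IsPMF.sum_mul univ (fun _ _ => by positivity) hw fun j _ => hm _
  have hrow : ∑ j, ((L : ℝ) - H2 (marginal S (ρ, j))) ≤ c := by
    have hlarge := logb_le_logb_of_le (b := 2) one_lt_two (by positivity) hcard
    rw [logb_rpow two_pos (by norm_num)] at hlarge
    have := sum_row_logb_card_sub_H2_marginal_le hS ρ
    simp only [hℓ, Fintype.card_fin] at this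
    push_cast at hlarge
    linarith
  have hdeficit : (L : ℝ) - H2 q ≤ c / N := by
    have hconc := sum_mul_H2_le_H2_sum univ (fun _ _ => by positivity) hw
      fun j _ => (hm (ρ, j)).1
    calc (L : ℝ) - H2 q ≤ ∑ j, (1 / N : ℝ) * (L - H2 (marginal S (ρ, j))) := by
          simp_rw [mul_sub, sum_sub_distrib, ← sum_mul, hw, one_mul]
          linarith [hqmix ▸ hconc]
      _ ≤ c / N := by
          rw [← mul_sum, one_div_mul_eq_div]
          gcongr
  have hpinsker := two_mul_sq_SD_uniform_le hqpmf
  rw [hℓ, hcardΩ] at hpinsker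
  have hlog2 : log 2 ≤ 1 := by linarith [log_le_sub_one_of_pos two_pos]
  refine (le_abs_self _).trans (abs_le_sqrt ?_)
  calc SD q (fun _ => (1 : ℝ) / 2 ^ L) ^ 2 ≤ log 2 * (L - H2 q) / 2 := by linarith
    _ ≤ log 2 * (c / N) / 2 := by gcongr
    _ ≤ 1 * (c / N) / 2 := by gcongr
    _ = c / (2 * N) := by ring

open scoped Classical in
/-- Near-uniformity of a random entry of a random matrix from a large set
(combination of the entropy chain with Claim 2.5, establishing Equation
(SD:R') in the proof of Lemma 3.2). -/
theorem sd_random_entry (D N L : ℕ) (hD : 0 < D) (hN : 0 < N) (hL : 0 < L)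
    (c : ℝ) (hc : 0 ≤ c)
    (S : Finset (Fin D × Fin N → (Fin L → Bool))) (hS : S.Nonempty)
    (hcard : (S.card : ℝ) ≥ (2 : ℝ) ^ (((D * N * L : ℕ) : ℝ) - c))
    (ρ : Fin D)
    (q : (Fin L → Bool) → ℝ)
    (hq : ∀ y, q y = (1 / (N : ℝ)) *
      ∑ j : Fin N, ((S.filter fun A => A (ρ, j) = y).card : ℝ) / S.card) :
    SD q (fun _ => (1 : ℝ) / 2 ^ L) ≤ Real.sqrt (c / (2 * N)) :=
  sd_random_entry_general D N L hN c hc S hS hcard ρ q hq
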